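/- Let A be a unital Banach algebra and X a unit-linked Banach A-bimodule. Suppose θ ≥ 0, f : A → X with f(0) = 0, and g : A → X with g(0) = g(1) = 0 satisfy max{‖f(λa + λb + c²) − λf(a) − λf(b) − c·f(c) − g(c)·c‖, ‖g(λab + λc) − λa·g(b) − λ·g(a)·b − λg(c)‖} ≤ θ for all a,b,c ∈ A and all λ ∈ ℂ with |λ| = 1. Then there exists a unique generalized Jordan derivation d : A → X with ‖f(a) − d(a)‖ ≤ θ for all a ∈ A. -/

import Mathlib

/-!
Hyers' direct method. Specialising the hypothesis shows that `f` and `g` are additive up to `θ`,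
commute with unimodular scalars up to `θ`, and satisfy `f(a²) ≈ a·f(a) + g(a)·a` and
`g(a²) ≈ a·g(a) + g(a)·a` up to `θ`. The limits `d a = lim 2⁻ⁿ f(2ⁿ a)` and
`δ a = lim 2⁻ⁿ g(2ⁿ a)` exist by completeness and `‖f - d‖ ≤ θ`. Each approximate identity,
evaluated at `2ⁿ a` and divided by `2ⁿ` (by `4ⁿ` for the quadratic ones), has an error that tends
to zero, so it holds exactly for `d` and `δ`. Homogeneity for unimodular scalars upgrades to
`ℂ`-linearity because every complex number of modulus at most `2` is a sum of two unimodular ones.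
Uniqueness: two additive maps at bounded distance agree, because their difference at `n • x` is
`n` times their difference at `x`.
-/

open Filter Topology MulOpposite

set_option linter.unusedSectionVars false
set_option linter.unusedVariables false

section

variable {A X : Type*}
  [NormedRing A] [NormedAlgebra ℂ A] [CompleteSpace A]
  [NormedAddCommGroup X] [NormedSpace ℂ X] [CompleteSpace X]
  [Module A X] [Module Aᵐᵒᵖ X]
  [IsBoundedSMul A X] [IsBoundedSMul Aᵐᵒᵖ X]
  [SMulCommClass A Aᵐᵒᵖ X]
  [IsScalarTower ℂ A X] [IsScalarTower ℂ Aᵐᵒᵖ X]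

/-- A Jordan derivation from `A` into the bimodule `X`: a `ℂ`-linear map `δ` with
`δ(a²) = a·δ(a) + δ(a)·a`. -/
def IsJordanDeriv (δ : A → X) : Prop :=
  (∀ x y : A, δ (x + y) = δ x + δ y) ∧ (∀ (μ : ℂ) (x : A), δ (μ • x) = μ • δ x) ∧
    ∀ a : A, δ (a ^ 2) = a • δ a + op a • δ a

/-- A generalized Jordan derivation: a `ℂ`-linear map `d` such that there is a Jordan
derivation `δ` with `d(a²) = a·d(a) + δ(a)·a`. -/
def IsGenJordanDeriv (d : A → X) : Prop :=
  (∀ x y : A, d (x + y) = d x + d y) ∧ (∀ (μ : ℂ) (x : A), d (μ • x) = μ • d x) ∧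
    ∃ δ : A → X, IsJordanDeriv δ ∧ ∀ a : A, d (a ^ 2) = a • d a + op a • δ a

lemma eq_of_tendsto_of_norm_sub_le {E : Type*} [NormedAddCommGroup E] {u v : ℕ → E}
    {r : ℕ → ℝ} {a b : E} (hu : Tendsto u atTop (𝓝 a)) (hv : Tendsto v atTop (𝓝 b))
    (hr : Tendsto r atTop (𝓝 0)) (huv : ∀ n, ‖u n - v n‖ ≤ r n) : a = b :=
  sub_eq_zero.mp <| tendsto_nhds_unique (hu.sub hv) (squeeze_zero_norm huv hr)

lemma tendsto_const_div_two_pow (K : ℝ) : Tendsto (fun n : ℕ ↦ K / 2 ^ n) atTop (𝓝 0) :=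
  tendsto_const_nhds.div_atTop (tendsto_pow_atTop_atTop_of_one_lt one_lt_two)

section Hyers

variable (𝕜 : Type*) {V E : Type*} [RCLike 𝕜] [AddCommGroup V]
  [NormedAddCommGroup E] [NormedSpace 𝕜 E]

noncomputable def hyersSeq (h : V → E) (x : V) (n : ℕ) : E :=
  ((2 : 𝕜) ^ n)⁻¹ • h (2 ^ n • x)

noncomputable def hyersLimit (h : V → E) (x : V) : E :=
  limUnder atTop (hyersSeq 𝕜 h x)

variable {𝕜}

lemma norm_inv_two_pow_smul (n : ℕ) (y : E) : ‖((2 : 𝕜) ^ n)⁻¹ • y‖ = ‖y‖ / 2 ^ n := by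
  rw [norm_smul, norm_inv, norm_pow, RCLike.norm_two, inv_mul_eq_div]

variable {h : V → E} {θ : ℝ}

lemma dist_hyersSeq_succ_le (hh : ∀ x y, ‖h (x + y) - h x - h y‖ ≤ θ) (x : V) (n : ℕ) :
    dist (hyersSeq 𝕜 h x n) (hyersSeq 𝕜 h x (n + 1)) ≤ θ / 2 / 2 ^ n := by
  set y := 2 ^ n • x
  have hdouble : 2 ^ (n + 1) • x = y + y := by rw [pow_succ, mul_nsmul, two_nsmul]
  have hdiff : hyersSeq 𝕜 h x (n + 1) - hyersSeq 𝕜 h x n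
      = ((2 : 𝕜) ^ (n + 1))⁻¹ • (h (y + y) - h y - h y) := by
    simp only [hyersSeq, hdouble]
    module
  rw [dist_eq_norm', hdiff, norm_inv_two_pow_smul, pow_succ, div_div, mul_comm]
  gcongr
  exact hh y y

variable [CompleteSpace E]

lemma tendsto_hyersSeq (hh : ∀ x y, ‖h (x + y) - h x - h y‖ ≤ θ) (x : V) :
    Tendsto (hyersSeq 𝕜 h x) atTop (𝓝 (hyersLimit 𝕜 h x)) :=
  (cauchySeq_of_le_geometric_two (dist_hyersSeq_succ_le hh x)).tendsto_limUnder

lemma norm_sub_hyersLimit_le (hh : ∀ x y, ‖h (x + y) - h x - h y‖ ≤ θ) (x : V) :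
    ‖h x - hyersLimit 𝕜 h x‖ ≤ θ := by
  simpa [hyersSeq, dist_eq_norm] using dist_le_of_le_geometric_two_of_tendsto₀
    (dist_hyersSeq_succ_le (𝕜 := 𝕜) hh x) (tendsto_hyersSeq hh x)

lemma hyersLimit_add (hh : ∀ x y, ‖h (x + y) - h x - h y‖ ≤ θ) (x y : V) :
    hyersLimit 𝕜 h (x + y) = hyersLimit 𝕜 h x + hyersLimit 𝕜 h y := by
  refine eq_of_tendsto_of_norm_sub_le (tendsto_hyersSeq hh (x + y))
    ((tendsto_hyersSeq hh x).add (tendsto_hyersSeq hh y)) (tendsto_const_div_two_pow θ)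
    fun n ↦ ?_
  have hdiff : hyersSeq 𝕜 h (x + y) n - (hyersSeq 𝕜 h x n + hyersSeq 𝕜 h y n)
      = ((2 : 𝕜) ^ n)⁻¹ • (h (2 ^ n • x + 2 ^ n • y) - h (2 ^ n • x) - h (2 ^ n • y)) := by
    simp only [hyersSeq, smul_add]
    module
  rw [hdiff, norm_inv_two_pow_smul]
  gcongr
  exact hh _ _

lemma hyersLimit_smul_of_norm_sub_le [Module 𝕜 V] (hh : ∀ x y, ‖h (x + y) - h x - h y‖ ≤ θ)
    {K : ℝ} {μ : 𝕜} (hμ : ∀ x, ‖h (μ • x) - μ • h x‖ ≤ K) (x : V) :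
    hyersLimit 𝕜 h (μ • x) = μ • hyersLimit 𝕜 h x := by
  refine eq_of_tendsto_of_norm_sub_le (tendsto_hyersSeq hh (μ • x))
    ((tendsto_hyersSeq hh x).const_smul μ) (tendsto_const_div_two_pow K) fun n ↦ ?_
  have hdiff : hyersSeq 𝕜 h (μ • x) n - μ • hyersSeq 𝕜 h x n
      = ((2 : 𝕜) ^ n)⁻¹ • (h (μ • 2 ^ n • x) - μ • h (2 ^ n • x)) := by
    rw [hyersSeq, hyersSeq, smul_comm (2 ^ n) μ x]
    module
  rw [hdiff, norm_inv_two_pow_smul]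
  gcongr
  exact hμ _

end Hyers

lemma Complex.exists_norm_eq_one_add_eq {z : ℂ} (hz : ‖z‖ ≤ 2) :
    ∃ l₁ l₂ : ℂ, ‖l₁‖ = 1 ∧ ‖l₂‖ = 1 ∧ l₁ + l₂ = z := by
  rcases eq_or_ne z 0 with rfl | hz0
  · exact ⟨1, -1, by simp, by simp, by ring⟩
  set r := ‖z‖ / 2
  set s := √(1 - r ^ 2)
  have hr : 0 ≤ r ∧ r ≤ 1 := ⟨by positivity, by simp only [r]; linarith⟩
  have hs : r ^ 2 + s ^ 2 = 1 := by
    rw [Real.sq_sqrt (by nlinarith)]; ring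
  have hnorm : ∀ t : ℝ, t ^ 2 = s ^ 2 → ‖z / ‖z‖ * (r + t * Complex.I)‖ = 1 := by
    intro t ht
    rw [norm_mul, norm_div, Complex.norm_real, norm_norm, div_self (norm_ne_zero_iff.mpr hz0),
      Complex.norm_add_mul_I, ht, hs, Real.sqrt_one, one_mul]
  refine ⟨z / ‖z‖ * (r + s * Complex.I), z / ‖z‖ * (r + (-s : ℝ) * Complex.I),
    hnorm s rfl, hnorm (-s) (neg_sq s), ?_⟩
  have : (‖z‖ : ℂ) ≠ 0 := by exact_mod_cast norm_ne_zero_iff.mpr hz0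
  simp only [r]
  push_cast
  field_simp
  ring

lemma map_smul_of_map_add_of_norm_eq_one {V W : Type*} [AddCommGroup V] [Module ℂ V]
    [AddCommGroup W] [Module ℂ W] {D : V → W} (hadd : ∀ x y, D (x + y) = D x + D y)
    (hunit : ∀ μ : ℂ, ‖μ‖ = 1 → ∀ x, D (μ • x) = μ • D x) (μ : ℂ) (x : V) :
    D (μ • x) = μ • D x := by
  obtain ⟨n, hn⟩ := exists_nat_ge (‖μ‖ / 2)
  have hpos : (0 : ℝ) < n + 1 := by positivity
  obtain ⟨l₁, l₂, h₁, h₂, hsum⟩ := Complex.exists_norm_eq_one_add_eq (z := μ / (n + 1 : ℕ)) <| by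
    rw [norm_div, Complex.norm_natCast, div_le_iff₀ (by exact_mod_cast hpos)]
    push_cast
    linarith
  have hμ : μ = ((n + 1 : ℕ) : ℂ) * (l₁ + l₂) := by
    rw [hsum, mul_div_cancel₀ _ (by exact_mod_cast (Nat.succ_ne_zero n))]
  have hnsmul : ∀ (m : ℕ) y, D (m • y) = m • D y := map_nsmul (AddMonoidHom.mk' D hadd)
  calc D (μ • x) = D ((n + 1) • (l₁ • x + l₂ • x)) := by
        rw [hμ, mul_smul, add_smul, Nat.cast_smul_eq_nsmul]
    _ = (n + 1) • (D (l₁ • x) + D (l₂ • x)) := by rw [hnsmul, hadd]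
    _ = μ • D x := by
        rw [hunit l₁ h₁, hunit l₂ h₂, ← add_smul, ← Nat.cast_smul_eq_nsmul ℂ, smul_smul, ← hμ]

lemma hyersLimit_complex_smul {V E : Type*} [AddCommGroup V] [Module ℂ V]
    [NormedAddCommGroup E] [NormedSpace ℂ E] [CompleteSpace E] {h : V → E} {θ K : ℝ}
    (hh : ∀ x y, ‖h (x + y) - h x - h y‖ ≤ θ)
    (hunit : ∀ μ : ℂ, ‖μ‖ = 1 → ∀ x, ‖h (μ • x) - μ • h x‖ ≤ K) (μ : ℂ) (x : V) :
    hyersLimit ℂ h (μ • x) = μ • hyersLimit ℂ h x :=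
  map_smul_of_map_add_of_norm_eq_one (hyersLimit_add hh)
    (fun _ hμ ↦ hyersLimit_smul_of_norm_sub_le hh (hunit _ hμ)) μ x

lemma hyersLimit_mul_self {𝕜 R M : Type*} [RCLike 𝕜] [Ring R] [NormedAddCommGroup M]
    [NormedSpace 𝕜 M] [CompleteSpace M] [Module R M] [Module Rᵐᵒᵖ M]
    [SMulCommClass R 𝕜 M] [SMulCommClass Rᵐᵒᵖ 𝕜 M]
    [ContinuousConstSMul R M] [ContinuousConstSMul Rᵐᵒᵖ M]
    {F G : R → M} {θ₁ θ₂ K : ℝ} (hF : ∀ x y, ‖F (x + y) - F x - F y‖ ≤ θ₁)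
    (hG : ∀ x y, ‖G (x + y) - G x - G y‖ ≤ θ₂)
    (hFG : ∀ a, ‖F (a * a) - a • F a - op a • G a‖ ≤ K) (a : R) :
    hyersLimit 𝕜 F (a * a) = a • hyersLimit 𝕜 F a + op a • hyersLimit 𝕜 G a := by
  have hdouble : Tendsto (fun n : ℕ ↦ n + n) atTop atTop :=
    tendsto_atTop_mono (fun n ↦ Nat.le_add_right n n) tendsto_id
  refine eq_of_tendsto_of_norm_sub_le ((tendsto_hyersSeq hF (a * a)).comp hdouble)
    (((tendsto_hyersSeq hF a).const_smul a).add ((tendsto_hyersSeq hG a).const_smul (op a)))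
    ((tendsto_const_div_two_pow K).comp hdouble) fun n ↦ ?_
  set b := 2 ^ n • a
  have hsq : 2 ^ (n + n) • (a * a) = b * b := by rw [smul_mul_smul_comm, pow_add]
  have hdiff : hyersSeq 𝕜 F (a * a) (n + n)
      - (a • hyersSeq 𝕜 F a n + op a • hyersSeq 𝕜 G a n)
      = ((2 : 𝕜) ^ (n + n))⁻¹ • (F (b * b) - b • F b - op b • G b) := by
    simp only [hyersSeq, hsq, smul_comm a, smul_comm (op a), b, smul_assoc, op_smul]
    -- hide the `R`-actions, which `match_scalars` cannot treat as atoms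
    generalize F (2 ^ n • a * 2 ^ n • a) = u
    generalize a • F (2 ^ n • a) = v
    generalize op a • G (2 ^ n • a) = w
    match_scalars <;> field_simp <;> ring
  show _ ≤ K / 2 ^ (n + n)
  rw [Function.comp_apply, hdiff, norm_inv_two_pow_smul]
  gcongr
  exact hFG b

lemma eq_of_map_add_of_norm_sub_le {V E : Type*} [AddCommGroup V] [NormedAddCommGroup E]
    [NormedSpace ℝ E] {D D' : V → E} (hD : ∀ x y, D (x + y) = D x + D y)
    (hD' : ∀ x y, D' (x + y) = D' x + D' y) {K : ℝ} (hK : ∀ x, ‖D x - D' x‖ ≤ K) : D = D' := by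
  let Δ : V →+ E := AddMonoidHom.mk' D hD - AddMonoidHom.mk' D' hD'
  funext x
  by_contra hne
  have hpos : 0 < ‖Δ x‖ := norm_pos_iff.mpr (sub_ne_zero.mpr hne)
  obtain ⟨n, hn⟩ := exists_nat_gt (K / ‖Δ x‖)
  have hbound : (n : ℝ) * ‖Δ x‖ ≤ K := by
    have hnx : ‖Δ (n • x)‖ ≤ K := hK (n • x)
    rwa [map_nsmul, ← Nat.cast_smul_eq_nsmul ℝ, norm_smul, Real.norm_natCast] at hnx
  rw [div_lt_iff₀ hpos] at hn
  linarith

theorem stmt_general (f g : A → X) (θ : ℝ)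
    (hf0 : f 0 = 0) (hg0 : g 0 = 0) (hg1 : g 1 = 0)
    (h : ∀ (a b c : A) (μ : ℂ), ‖μ‖ = 1 →
      max ‖f (μ • a + μ • b + c ^ 2) - μ • f a - μ • f b - c • f c - op c • g c‖
        ‖g (μ • (a * b) + μ • c) - μ • a • g b - μ • op b • g a - μ • g c‖ ≤ θ) :
    ∃! d : A → X, IsGenJordanDeriv d ∧ ∀ a : A, ‖f a - d a‖ ≤ θ := by
  have hf (a b c : A) (μ : ℂ) (hμ : ‖μ‖ = 1) := (le_max_left _ _).trans (h a b c μ hμ)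
  have hg (a b c : A) (μ : ℂ) (hμ : ‖μ‖ = 1) := (le_max_right _ _).trans (h a b c μ hμ)
  have hf_add : ∀ x y, ‖f (x + y) - f x - f y‖ ≤ θ := fun x y ↦ by simpa using hf x y 0 1
  have hf_unit : ∀ μ : ℂ, ‖μ‖ = 1 → ∀ x, ‖f (μ • x) - μ • f x‖ ≤ θ := fun μ hμ x ↦ by
    simpa [hf0] using hf x 0 0 μ hμ
  have hf_sq : ∀ a, ‖f (a * a) - a • f a - op a • g a‖ ≤ θ := fun a ↦ by
    simpa [hf0, sq] using hf 0 0 a 1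
  have hg_add : ∀ x y, ‖g (x + y) - g x - g y‖ ≤ θ := fun x y ↦ by
    simpa [hg1] using hg 1 x y 1
  have hg_unit : ∀ μ : ℂ, ‖μ‖ = 1 → ∀ x, ‖g (μ • x) - μ • g x‖ ≤ θ := fun μ hμ x ↦ by
    simpa [hg0, hg1] using hg 1 x 0 μ hμ
  have hg_sq : ∀ a, ‖g (a * a) - a • g a - op a • g a‖ ≤ θ := fun a ↦ by
    simpa [hg0] using hg a a 0 1
  have hδ : IsJordanDeriv (hyersLimit ℂ g) :=
    ⟨hyersLimit_add hg_add, hyersLimit_complex_smul hg_add hg_unit,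
      fun a ↦ by rw [sq]; exact hyersLimit_mul_self hg_add hg_add hg_sq a⟩
  have hd : IsGenJordanDeriv (hyersLimit ℂ f) :=
    ⟨hyersLimit_add hf_add, hyersLimit_complex_smul hf_add hf_unit, hyersLimit ℂ g, hδ,
      fun a ↦ by rw [sq]; exact hyersLimit_mul_self hf_add hg_add hf_sq a⟩
  refine ⟨hyersLimit ℂ f, ⟨hd, norm_sub_hyersLimit_le hf_add⟩, fun d ⟨hd', hfd⟩ ↦ ?_⟩
  refine eq_of_map_add_of_norm_sub_le (K := θ + θ) hd'.1 hd.1 fun x ↦ ?_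
  calc ‖d x - hyersLimit ℂ f x‖ ≤ ‖d x - f x‖ + ‖f x - hyersLimit ℂ f x‖ :=
        norm_sub_le_norm_sub_add_norm_sub _ _ _
    _ ≤ θ + θ :=
        add_le_add ((norm_sub_rev _ _).trans_le (hfd x)) (norm_sub_hyersLimit_le hf_add x)

theorem stmt (f g : A → X) (θ : ℝ) (hθ : 0 ≤ θ)
    (hf0 : f 0 = 0) (hg0 : g 0 = 0) (hg1 : g 1 = 0)
    (h : ∀ (a b c : A) (μ : ℂ), ‖μ‖ = 1 →
      max ‖f (μ • a + μ • b + c ^ 2) - μ • f a - μ • f b - c • f c - op c • g c‖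
        ‖g (μ • (a * b) + μ • c) - μ • a • g b - μ • op b • g a - μ • g c‖ ≤ θ) :
    ∃! d : A → X, IsGenJordanDeriv d ∧ ∀ a : A, ‖f a - d a‖ ≤ θ :=
  stmt_general f g θ hf0 hg0 hg1 h
end
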